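/- arXiv:2103.05144 — 3 statements merged into one kernel-verified Lean document; each statement's English description precedes it below -/
import Mathlib

section
/- Let {x_i}_{i=1}^N and {y_i}_{i=1}^N be finite sequences of nonnegative reals with x_i ≍_{K,C} y_i for all i (i.e. (1/K)x_i - C ≤ y_i ≤ Kx_i + C), where K ≥ 1 and C ≥ 0. If κ > 2KC, then Σ_{i=1}^N [x_i]_κ ≤ 2K · Σ_{i=1}^N [y_i]_C, where [A]_B = A if A ≥ B and 0 otherwise. -/
/-!
The inequality holds term by term. If `x ≥ κ`, the lower bound `x / K - C ≤ y` and `κ > 2KC`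
give `y > C`, so `[y]_C = y`, and `2K y ≥ 2x - 2KC > x`. If `x < κ`, the left side is `0`.
-/

noncomputable def trunc (A B : ℝ) : ℝ := if B ≤ A then A else 0

theorem trunc_of_le {A B : ℝ} (h : B ≤ A) : trunc A B = A := if_pos h

theorem trunc_of_lt {A B : ℝ} (h : A < B) : trunc A B = 0 := if_neg h.not_ge

theorem trunc_nonneg {A : ℝ} (B : ℝ) (hA : 0 ≤ A) : 0 ≤ trunc A B := by
  unfold trunc
  split_ifs <;> first | exact hA | exact le_rfl

theorem trunc_le_two_mul_trunc_of_lower_bound {K C κ a b : ℝ} (hK : 0 < K) (hb : 0 ≤ b)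
    (hab : 1 / K * a - C ≤ b) (hκ : 2 * K * C < κ) :
    trunc a κ ≤ 2 * K * trunc b C := by
  rcases le_or_gt κ a with ha | ha
  · have hKb : a - K * C ≤ K * b := by
      have := mul_le_mul_of_nonneg_left hab hK.le
      rwa [mul_sub, ← mul_assoc, mul_one_div_cancel hK.ne', one_mul] at this
    have hCb : C ≤ b := le_of_lt <| lt_of_mul_lt_mul_left (by linarith) hK.le
    rw [trunc_of_le ha, trunc_of_le hCb]
    linarith
  · rw [trunc_of_lt ha]
    exact mul_nonneg (by linarith) (trunc_nonneg C hb)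

theorem truncated_sum_comparable_general (N : ℕ) (x y : Fin N → ℝ) (K C κ : ℝ)
    (hK : 1 ≤ K)
    (hy : ∀ i, 0 ≤ y i)
    (hcomp : ∀ i, (1 / K) * x i - C ≤ y i ∧ y i ≤ K * x i + C)
    (hκ : 2 * K * C < κ) :
    ∑ i, trunc (x i) κ ≤ 2 * K * ∑ i, trunc (y i) C := by
  rw [Finset.mul_sum]
  exact Finset.sum_le_sum fun i _ =>
    trunc_le_two_mul_trunc_of_lower_bound (by linarith) (hy i) (hcomp i).1 hκ

/-- Lemma 2.1: if x_i ≍_{K,C} y_i for all i and κ > 2KC, then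
    Σ [x_i]_κ ≤ 2K Σ [y_i]_C. -/
theorem truncated_sum_comparable (N : ℕ) (x y : Fin N → ℝ) (K C κ : ℝ)
    (hK : 1 ≤ K) (hC : 0 ≤ C)
    (hx : ∀ i, 0 ≤ x i) (hy : ∀ i, 0 ≤ y i)
    (hcomp : ∀ i, (1 / K) * x i - C ≤ y i ∧ y i ≤ K * x i + C)
    (hκ : 2 * K * C < κ) :
    ∑ i, trunc (x i) κ ≤ 2 * K * ∑ i, trunc (y i) C :=
  truncated_sum_comparable_general N x y K C κ hK hy hcomp hκ
end

section
/- Let f : C(Y) → ℤ be defined by f(α) = α · ρ for a fixed vertex ρ, where for distinct vertices α, β one has d_Y(α, β) = |α · β| + 1 and the algebraic intersection satisfies α · ρ = α · β + β · ρ + ε(α,β,ρ) with ε ∈ {-1,0,1}. Then for all vertices α, β: |f(α) - f(β)| ≤ d_Y(α, β) ≤ |f(α) - f(β)| + 2; in particular f is a (1,2)-quasi-isometric embedding of C(Y) into ℤ. -/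
/-! The cocycle relation for `α, β, ρ` says that `f α - f β` differs from `α · β` by at most one.
Hence `|f α - f β|` and `|α · β|` differ by at most one, and `d α β = |α · β| + 1` for `α ≠ β`. -/

/-- The annular curve graph quasi-isometrically embeds into ℤ via algebraic
    intersection number with a fixed vertex ρ:
    |f(α) - f(β)| ≤ d_Y(α,β) ≤ |f(α) - f(β)| + 2, where f(α) = α·ρ. -/
theorem annular_graph_qi_embeds_in_int (V : Type*) (d : V → V → ℝ)
    (inter : V → V → ℤ)
    (hd0 : ∀ α, d α α = 0)
    (hdist : ∀ α β, α ≠ β → d α β = |(inter α β : ℝ)| + 1)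
    (hcocycle : ∀ α β ρ, |inter α ρ - (inter α β + inter β ρ)| ≤ 1)
    (ρ : V) (f : V → ℤ) (hf : ∀ α, f α = inter α ρ) :
    ∀ α β, (|(f α - f β : ℤ)| : ℝ) ≤ d α β ∧
      d α β ≤ (|(f α - f β : ℤ)| : ℝ) + 2 := by
  intro α β
  rcases eq_or_ne α β with rfl | hne
  · simp [hd0]
  have hε : |f α - f β - inter α β| ≤ 1 := by
    rw [hf, hf, sub_sub, add_comm (inter β ρ)]
    exact hcocycle α β ρ
  have habs : |(|((f α - f β : ℤ) : ℝ)| - |(inter α β : ℝ)|)| ≤ 1 := by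
    exact_mod_cast (abs_abs_sub_abs_le_abs_sub _ _).trans hε
  rw [hdist α β hne]
  constructor <;> linarith [(abs_le.mp habs).1, (abs_le.mp habs).2]
end

section
/- Let X be a geodesic metric space, and let points satisfy: x, z on geodesic [α, β], z' ∈ [β, γ], z'' ∈ [α, γ], y ∈ [β, γ], with d(z,z') ≤ δ, d(z,z'') ≤ δ, d(z,β) ≤ C₀, d(z',β) ≤ C₀, d(x,β) > C₀, d(y,β) > C₀, and suppose there exist x' ∈ [α, z''] with d(x,x') ≤ 2δ and y' ∈ [z'', γ] with d(y,y') ≤ 3δ. Then d(x,β) + d(β,y) ≤ d(x,y) + 2C₀ + 13δ. -/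
/-!
Going through β instead of along [x, y] costs at most `d(z,β) + d(z',β) ≤ 2C₀` over
`d(x,z) + d(z',y)`. Transported to `x'` and `y'`, these two pieces become `d(x',z'')` and
`d(z'',y')`, whose sum is `d(x',y') ≤ d(x,y) + 5δ`; each transport costs a few `δ`.
-/

theorem dist_add_dist_le_of_dist_add_dist_eq {X : Type*} [PseudoMetricSpace X]
    {x y z z' z'' x' y' : X} (hmid : dist x' z'' + dist z'' y' = dist x' y') :
    dist x z + dist z' y ≤
      dist x y + 2 * dist x x' + 2 * dist y y' + 2 * dist z z'' + dist z z' := by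
  have hx : dist x z ≤ dist x x' + dist x' z'' + dist z z'' := by
    simpa only [dist_comm z'' z] using dist_triangle4 x x' z'' z
  have hy : dist z' y ≤ dist z z' + dist z z'' + dist z'' y' + dist y y' := by
    calc dist z' y ≤ dist z' y' + dist y' y := dist_triangle _ _ _
      _ ≤ dist z' z + dist z z'' + dist z'' y' + dist y' y := by
          gcongr; exact dist_triangle4 z' z z'' y'
      _ = dist z z' + dist z z'' + dist z'' y' + dist y y' := by
          rw [dist_comm z' z, dist_comm y' y]
  have hxy : dist x' y' ≤ dist x x' + dist x y + dist y y' := by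
    simpa only [dist_comm x' x] using dist_triangle4 x' x y y'
  linarith

theorem case2_lemma33_general (X : Type*) [MetricSpace X]
    (β z'' x y z z' x' y' : X) (δ C₀ : ℝ)
    -- x, z lie on a geodesic [α, β] with z between x and β:
    (hxz : dist x β = dist x z + dist z β)
    -- y, z' lie on a geodesic [β, γ] with z' between β and y:
    (hyz : dist β y = dist β z' + dist z' y)
    (hzz' : dist z z' ≤ δ) (hzz'' : dist z z'' ≤ δ)
    (hzβ : dist z β ≤ C₀) (hz'β : dist z' β ≤ C₀)
    (hxx' : dist x x' ≤ 2 * δ) (hyy' : dist y y' ≤ 3 * δ)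
    -- x' ∈ [α, z''] and y' ∈ [z'', γ], so z'' lies between x' and y':
    (hmid : dist x' z'' + dist z'' y' = dist x' y') :
    dist x β + dist β y ≤ dist x y + 2 * C₀ + 13 * δ := by
  have hsplit : dist x β + dist β y = dist x z + dist z' y + dist z β + dist z' β := by
    rw [hxz, hyz, dist_comm β z']
    ring
  have hdetour := dist_add_dist_le_of_dist_add_dist_eq (x := x) (y := y) (z := z) (z' := z') hmid
  linarith

/-- Case 2 of Lemma 3.3: with the thin-triangle points z, z', z'', x', y' as in the
    proof, d(x,β) + d(β,y) ≤ d(x,y) + 2C₀ + 13δ. -/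
theorem case2_lemma33 (X : Type*) [MetricSpace X]
    (α β γ z'' x y z z' x' y' : X) (δ C₀ : ℝ) (hδ : 0 ≤ δ) (hC₀ : 0 ≤ C₀)
    -- x, z lie on a geodesic [α, β] with z between x and β:
    (hxz : dist x β = dist x z + dist z β)
    -- y, z' lie on a geodesic [β, γ] with z' between β and y:
    (hyz : dist β y = dist β z' + dist z' y)
    (hzz' : dist z z' ≤ δ) (hzz'' : dist z z'' ≤ δ)
    (hzβ : dist z β ≤ C₀) (hz'β : dist z' β ≤ C₀)
    (hxβ : C₀ < dist x β) (hyβ : C₀ < dist y β)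
    (hxx' : dist x x' ≤ 2 * δ) (hyy' : dist y y' ≤ 3 * δ)
    -- x' ∈ [α, z''] and y' ∈ [z'', γ], so z'' lies between x' and y':
    (hx' : dist α x' + dist x' z'' = dist α z'')
    (hy' : dist z'' y' + dist y' γ = dist z'' γ)
    (hmid : dist x' z'' + dist z'' y' = dist x' y') :
    dist x β + dist β y ≤ dist x y + 2 * C₀ + 13 * δ :=
  case2_lemma33_general X β z'' x y z z' x' y' δ C₀ hxz hyz hzz' hzz'' hzβ hz'β hxx' hyy' hmid
end
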